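/- arXiv:2504.06837 — 10 statements merged into one kernel-verified Lean document; each statement's English description precedes it below -/
import Mathlib

section
/- For every real number s, with C(s) = 2·s·arsinh(s/2) − 2·√(s² + 4) + 4, one has C(s) ≤ 2·s·arsinh(s/2) ≤ 2·C(s). -/
/-- The Legendre conjugate of `C*(σ) = 4 cosh(σ/2) - 4`. -/
noncomputable def Cfun (s : ℝ) : ℝ :=
  2 * s * Real.arsinh (s / 2) - 2 * Real.sqrt (s ^ 2 + 4) + 4

/-!
Substituting `s = 2 sinh u` turns `C(s)` into `4 u sinh u - 4 cosh u + 4` and `2 s arsinh (s/2)`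
into `4 u sinh u`. The lower bound is then `cosh u ≥ 1`, and the upper bound is
`2 (cosh u - 1) ≤ u sinh u`; by the half-angle formulas (`v = u / 2`) this is
`sinh v ^ 2 ≤ v sinh v cosh v`, i.e. `tanh v ≤ v` for `v ≥ 0`, which is the mean value theorem
for `sinh` on `[0, v]`.
-/

namespace Real

theorem sinh_le_mul_cosh {x : ℝ} (hx : 0 ≤ x) : sinh x ≤ x * cosh x := by
  have hmvt := (convex_Icc 0 x).image_sub_le_mul_sub_of_deriv_le continuous_sinh.continuousOn
    differentiable_sinh.differentiableOn
    (fun y hy ↦ by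
      rw [interior_Icc] at hy
      rw [deriv_sinh, cosh_le_cosh, abs_of_pos hy.1, abs_of_nonneg hx]
      exact hy.2.le)
    0 (Set.left_mem_Icc.2 hx) x (Set.right_mem_Icc.2 hx) hx
  simpa [mul_comm] using hmvt

theorem sinh_sq_le_mul_sinh_mul_cosh (x : ℝ) : sinh x ^ 2 ≤ x * sinh x * cosh x := by
  suffices 0 ≤ sinh x * (x * cosh x - sinh x) by nlinarith
  rcases le_total 0 x with hx | hx
  · exact mul_nonneg (sinh_nonneg_iff.2 hx) (sub_nonneg.2 (sinh_le_mul_cosh hx))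
  · have := sinh_le_mul_cosh (neg_nonneg.2 hx)
    rw [sinh_neg, cosh_neg] at this
    exact mul_nonneg_of_nonpos_of_nonpos (sinh_nonpos_iff.2 hx) (by linarith)

theorem two_mul_cosh_sub_two_le_mul_sinh (x : ℝ) : 2 * cosh x - 2 ≤ x * sinh x := by
  have h := sinh_sq_le_mul_sinh_mul_cosh (x / 2)
  have hx : x = 2 * (x / 2) := by ring
  rw [hx, cosh_two_mul, sinh_two_mul, cosh_sq]
  nlinarith

end Real

open Real in
theorem Cfun_two_mul_sinh (u : ℝ) : Cfun (2 * sinh u) = 4 * u * sinh u - 4 * cosh u + 4 := by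
  have hsqrt : √((2 * sinh u) ^ 2 + 4) = 2 * cosh u := by
    rw [show (2 * sinh u) ^ 2 + 4 = (2 * cosh u) ^ 2 by rw [mul_pow, mul_pow, cosh_sq]; ring,
      sqrt_sq (by positivity)]
  rw [Cfun, mul_div_cancel_left₀ _ two_ne_zero, arsinh_sinh, hsqrt]
  ring

theorem Cfun_le_mul_deriv_le_two_Cfun (s : ℝ) :
    Cfun s ≤ 2 * s * Real.arsinh (s / 2) ∧ 2 * s * Real.arsinh (s / 2) ≤ 2 * Cfun s := by
  obtain ⟨u, rfl⟩ : ∃ u, s = 2 * Real.sinh u :=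
    ⟨Real.arsinh (s / 2), by rw [Real.sinh_arsinh]; ring⟩
  rw [Cfun_two_mul_sinh, mul_div_cancel_left₀ _ two_ne_zero, Real.arsinh_sinh]
  exact ⟨by linarith [Real.one_le_cosh u], by linarith [Real.two_mul_cosh_sub_two_le_mul_sinh u]⟩
end

section
/- For every real number s and every real w > 0, the value w·C(s/w) is the greatest element of the set { s·ζ − w·(4·cosh(ζ/2) − 4) : ζ ∈ ℝ }; in particular sup_{ζ∈ℝ} { s·ζ − w·C*(ζ) } = w·C(s/w). -/
open Real

-- Average of the tangent-line bounds for `exp` at `y` and at `-y`.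
lemma cosh_add_sinh_mul_sub_le_cosh (x y : ℝ) : cosh y + sinh y * (x - y) ≤ cosh x := by
  have hpos : exp y * (x - y + 1) ≤ exp x := by
    simpa [← exp_add] using mul_le_mul_of_nonneg_left (add_one_le_exp (x - y)) (exp_pos y).le
  have hneg : exp (-y) * (-x - -y + 1) ≤ exp (-x) := by
    simpa [← exp_add] using
      mul_le_mul_of_nonneg_left (add_one_le_exp (-x - -y)) (exp_pos (-y)).le
  rw [cosh_eq, sinh_eq, cosh_eq]
  linarith

lemma isGreatest_perspective {f g : ℝ → ℝ}
    (hfg : ∀ t, IsGreatest {y | ∃ ζ, y = t * ζ - f ζ} (g t)) (s : ℝ) {w : ℝ} (hw : 0 < w) :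
    IsGreatest {y | ∃ ζ, y = s * ζ - w * f ζ} (w * g (s / w)) := by
  have himage : {y | ∃ ζ, y = s * ζ - w * f ζ} = (w * ·) '' {y | ∃ ζ, y = s / w * ζ - f ζ} := by
    ext y
    constructor
    · rintro ⟨ζ, rfl⟩
      exact ⟨_, ⟨ζ, rfl⟩, by field_simp⟩
    · rintro ⟨_, ⟨ζ, rfl⟩, rfl⟩
      exact ⟨ζ, by field_simp⟩
  rw [himage]
  exact (monotone_mul_left_of_nonneg hw.le).map_isGreatest (hfg (s / w))

lemma mul_two_arsinh_sub_eq_Cfun (t : ℝ) : t * (2 * arsinh (t / 2)) - (4 * cosh (arsinh (t / 2)) - 4) = Cfun t := by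
  have hsqrt : √(t ^ 2 + 4) = 2 * √(1 + (t / 2) ^ 2) := by
    rw [show t ^ 2 + 4 = 2 ^ 2 * (1 + (t / 2) ^ 2) by ring, sqrt_mul (by positivity),
      sqrt_sq zero_le_two]
  rw [cosh_arsinh, Cfun, hsqrt]
  ring

lemma isGreatest_Cfun (t : ℝ) :
    IsGreatest {y | ∃ ζ, y = t * ζ - (4 * cosh (ζ / 2) - 4)} (Cfun t) := by
  refine ⟨⟨2 * arsinh (t / 2), ?_⟩, ?_⟩
  · rw [← mul_two_arsinh_sub_eq_Cfun, mul_div_cancel_left₀ _ two_ne_zero]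
  · rintro _ ⟨ζ, rfl⟩
    have htangent := cosh_add_sinh_mul_sub_le_cosh (ζ / 2) (arsinh (t / 2))
    rw [sinh_arsinh] at htangent
    linarith [mul_two_arsinh_sub_eq_Cfun t]

theorem perspective_as_sup (s w : ℝ) (hw : 0 < w) :
    IsGreatest {y : ℝ | ∃ ζ : ℝ, y = s * ζ - w * (4 * Real.cosh (ζ / 2) - 4)}
      (w * Cfun (s / w)) :=
  isGreatest_perspective isGreatest_Cfun s hw
end

section
/- For every q > 1, every real s, and every w > 0, one has C(s) ≤ (q/(q−1))·w·C(s/w) + (4/(q−1))·w^q, where C(s) = 2·s·arsinh(s/2) − 2·√(s² + 4) + 4. -/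
open Real

noncomputable def Cstar (ζ : ℝ) : ℝ := 4 * cosh (ζ / 2) - 4

namespace Real

lemma sinh_mul_sub_le_cosh_sub_cosh (a v : ℝ) : sinh a * (v - a) ≤ cosh v - cosh a := by
  have hpos : exp a * (v - a + 1) ≤ exp v := by
    calc exp a * (v - a + 1) ≤ exp a * exp (v - a) := by gcongr; exact add_one_le_exp _
      _ = exp v := by rw [← exp_add]; ring_nf
  have hneg : exp (-a) * (a - v + 1) ≤ exp (-v) := by
    calc exp (-a) * (a - v + 1) ≤ exp (-a) * exp (a - v) := by gcongr; exact add_one_le_exp _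
      _ = exp (-v) := by rw [← exp_add]; ring_nf
  rw [cosh_eq, cosh_eq, sinh_eq]
  linarith

lemma sqrt_sq_add_four_eq_two_mul_cosh_arsinh (σ : ℝ) :
    √(σ ^ 2 + 4) = 2 * cosh (arsinh (σ / 2)) := by
  rw [cosh_arsinh, show σ ^ 2 + 4 = 2 ^ 2 * (1 + (σ / 2) ^ 2) by ring,
    sqrt_mul (by norm_num), sqrt_sq (by norm_num)]

lemma cosh_mul_le_cosh_rpow {θ : ℝ} (h0 : 0 ≤ θ) (h1 : θ ≤ 1) (x : ℝ) :
    cosh (θ * x) ≤ cosh x ^ θ := by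
  have hconc := (concaveOn_rpow h0 h1).2 (Set.mem_Ici.2 (exp_pos x).le)
    (Set.mem_Ici.2 (exp_pos (-x)).le) (by norm_num : (0 : ℝ) ≤ 1 / 2)
    (by norm_num : (0 : ℝ) ≤ 1 / 2) (by norm_num)
  calc cosh (θ * x) = 1 / 2 * exp x ^ θ + 1 / 2 * exp (-x) ^ θ := by
        rw [cosh_eq, ← exp_mul, ← exp_mul]; ring_nf
    _ ≤ (1 / 2 * exp x + 1 / 2 * exp (-x)) ^ θ := hconc
    _ = cosh x ^ θ := by rw [cosh_eq]; ring_nf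

lemma cosh_mul_sub_one_le_rpow {θ : ℝ} (h0 : 0 ≤ θ) (h1 : θ ≤ 1) (x : ℝ) :
    cosh (θ * x) - 1 ≤ (cosh x - 1) ^ θ := by
  have hsub : (cosh x - 1 + 1) ^ θ ≤ (cosh x - 1) ^ θ + 1 ^ θ :=
    rpow_add_le_add_rpow (by linarith [one_le_cosh x]) zero_le_one h0 h1
  rw [sub_add_cancel, one_rpow] at hsub
  linarith [cosh_mul_le_cosh_rpow h0 h1 x]

end Real

lemma mul_mul_le_rpow_add_of_le_rpow {q w a b : ℝ} (hq : 1 < q) (hw : 0 ≤ w) (ha : 0 ≤ a)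
    (hb : 0 ≤ b) (hab : a ≤ b ^ ((q - 1) / q)) : q * (w * a) ≤ w ^ q + (q - 1) * b := by
  have hq1 : 0 < q - 1 := by linarith
  have hpow : a ^ (q / (q - 1)) ≤ b := by
    calc a ^ (q / (q - 1)) ≤ (b ^ ((q - 1) / q)) ^ (q / (q - 1)) := by gcongr
      _ = b := by
        rw [← rpow_mul hb, show (q - 1) / q * (q / (q - 1)) = 1 by field_simp, rpow_one]
  have hyoung := young_inequality_of_nonneg hw ha (HolderConjugate.conjExponent hq)
  calc q * (w * a) ≤ q * (w ^ q / q + a ^ (q / (q - 1)) / (q / (q - 1))) :=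
        mul_le_mul_of_nonneg_left hyoung (by linarith)
    _ = w ^ q + (q - 1) * a ^ (q / (q - 1)) := by field_simp
    _ ≤ w ^ q + (q - 1) * b := by gcongr

lemma Cfun_eq_mul_sub_Cstar (σ : ℝ) :
    Cfun σ = σ * (2 * arsinh (σ / 2)) - Cstar (2 * arsinh (σ / 2)) := by
  rw [Cfun, Cstar, sqrt_sq_add_four_eq_two_mul_cosh_arsinh, mul_div_cancel_left₀ _ two_ne_zero]
  ring

lemma mul_sub_Cstar_le_Cfun (σ ζ : ℝ) : σ * ζ - Cstar ζ ≤ Cfun σ := by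
  have htangent := sinh_mul_sub_le_cosh_sub_cosh (arsinh (σ / 2)) (ζ / 2)
  rw [sinh_arsinh] at htangent
  rw [Cfun_eq_mul_sub_Cstar, Cstar, Cstar, mul_div_cancel_left₀ _ two_ne_zero]
  linarith

lemma mul_sub_mul_Cstar_le_mul_Cfun_div (s ζ : ℝ) {w : ℝ} (hw : 0 < w) :
    s * ζ - w * Cstar ζ ≤ w * Cfun (s / w) := by
  calc s * ζ - w * Cstar ζ = w * (s / w * ζ - Cstar ζ) := by field_simp
    _ ≤ w * Cfun (s / w) := by gcongr; exact mul_sub_Cstar_le_Cfun _ _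

lemma mul_mul_Cstar_mul_le {q w : ℝ} (hq : 1 < q) (hw : 0 ≤ w) (ζ : ℝ) :
    q * (w * Cstar ((q - 1) / q * ζ)) ≤ 4 * w ^ q + (q - 1) * Cstar ζ := by
  have hθ0 : 0 ≤ (q - 1) / q := div_nonneg (by linarith) (by linarith)
  have hθ1 : (q - 1) / q ≤ 1 := by rw [div_le_one (by linarith)]; linarith
  have hcosh := cosh_mul_sub_one_le_rpow hθ0 hθ1 (ζ / 2)
  rw [← mul_div_assoc] at hcosh
  have hyoung := mul_mul_le_rpow_add_of_le_rpow hq hw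
    (by linarith [one_le_cosh ((q - 1) / q * ζ / 2)]) (by linarith [one_le_cosh (ζ / 2)]) hcosh
  unfold Cstar
  linarith

theorem magical_estimate (q : ℝ) (hq : 1 < q) (s : ℝ) (w : ℝ) (hw : 0 < w) :
    Cfun s ≤ q / (q - 1) * (w * Cfun (s / w)) + 4 / (q - 1) * w ^ q := by
  set ζ := 2 * arsinh (s / 2)
  have hq1 : 0 < q - 1 := by linarith
  have hpersp := mul_sub_mul_Cstar_le_mul_Cfun_div s ((q - 1) / q * ζ) hw
  have hscaled := mul_mul_Cstar_mul_le hq hw.le ζ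
  have hscale : q * (s * ((q - 1) / q * ζ)) = (q - 1) * (s * ζ) := by field_simp
  rw [div_mul_eq_mul_div, div_mul_eq_mul_div, ← add_div, le_div_iff₀ hq1,
    Cfun_eq_mul_sub_Cstar s]
  linear_combination q * hpersp + hscaled - hscale
end

section
/- Let C(s) = 2·s·arsinh(s/2) − 2·√(s² + 4) + 4 and, for p > 1, U_p(w) = (w^p − p·w + p − 1)/(p·(p−1)). Then for every real s, every w > 0, and every p > 1: if w ≤ 1 then w·C(s/w) ≥ C(s), and if w ≥ 1 then w·C(s/w) ≥ ((p−1)/p)·C(s) − 4·(p−1)·U_p(w). -/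
/-- The auxiliary function `U_p(w) = (w^p - p w + p - 1)/(p(p-1))`. -/
noncomputable def Ufun (p w : ℝ) : ℝ := (w ^ p - p * w + p - 1) / (p * (p - 1))

lemma cosh_tangent (x y : ℝ) : Real.cosh y + Real.sinh y * (x - y) ≤ Real.cosh x := by
  have h1 : (x - y) + 1 ≤ Real.exp (x - y) := Real.add_one_le_exp _
  have h2 : (y - x) + 1 ≤ Real.exp (y - x) := Real.add_one_le_exp _
  have e1 : Real.exp y * ((x - y) + 1) ≤ Real.exp x := by
    have := mul_le_mul_of_nonneg_left h1 (Real.exp_pos y).le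
    rwa [← Real.exp_add, add_sub_cancel] at this
  have e2 : Real.exp (-y) * ((y - x) + 1) ≤ Real.exp (-x) := by
    have := mul_le_mul_of_nonneg_left h2 (Real.exp_pos (-y)).le
    rwa [← Real.exp_add, show -y + (y - x) = -x by ring] at this
  rw [Real.cosh_eq, Real.cosh_eq, Real.sinh_eq]
  nlinarith [e1, e2]

lemma sqrt_helper (u : ℝ) : Real.sqrt (1 + (u / 2) ^ 2) = Real.sqrt (u ^ 2 + 4) / 2 := by
  rw [show 1 + (u / 2) ^ 2 = (u ^ 2 + 4) * (1 / 2) ^ 2 by ring,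
    Real.sqrt_mul (by positivity), Real.sqrt_sq (by norm_num)]
  ring

/-- Young's inequality for `Cfun` and its conjugate. -/
lemma young_C (u ζ : ℝ) : ζ * u ≤ Cfun u + (4 * Real.cosh (ζ / 2) - 4) := by
  have ht := cosh_tangent (ζ / 2) (Real.arsinh (u / 2))
  rw [Real.cosh_arsinh, Real.sinh_arsinh, sqrt_helper] at ht
  have h4 : (0:ℝ) ≤ Real.sqrt (u ^ 2 + 4) := Real.sqrt_nonneg _
  unfold Cfun
  nlinarith [ht]

lemma key_cosh {p : ℝ} (hp : 1 < p) {w : ℝ} (hw : 0 ≤ w) (x : ℝ) :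
    w * Real.cosh ((p - 1) / p * x) ≤ w ^ p / p + (p - 1) / p * Real.cosh x := by
  have hpq : p.HolderConjugate (p / (p - 1)) := Real.HolderConjugate.conjExponent hp
  have hq : (1 : ℝ) / (p / (p - 1)) = (p - 1) / p := by
    rw [one_div_div]
  have hqpos : 0 < p / (p - 1) := hpq.symm.pos
  have key : ∀ t : ℝ, w * Real.exp ((p - 1) / p * t) ≤ w ^ p / p + (p - 1) / p * Real.exp t := by
    intro t
    have hb : (0:ℝ) ≤ Real.exp t ^ ((1:ℝ) / (p / (p - 1))) := Real.rpow_nonneg (Real.exp_pos t).le _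
    have hy := Real.young_inequality_of_nonneg hw hb hpq
    have hbq : (Real.exp t ^ ((1:ℝ) / (p / (p - 1)))) ^ (p / (p - 1)) = Real.exp t := by
      rw [← Real.rpow_mul (Real.exp_pos t).le, one_div_mul_cancel hqpos.ne', Real.rpow_one]
    rw [hbq] at hy
    have hbe : Real.exp t ^ ((1:ℝ) / (p / (p - 1))) = Real.exp ((p - 1) / p * t) := by
      rw [hq, ← Real.exp_mul, mul_comm]
    rw [hbe] at hy
    calc w * Real.exp ((p - 1) / p * t) ≤ w ^ p / p + Real.exp t / (p / (p - 1)) := hy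
      _ = w ^ p / p + (p - 1) / p * Real.exp t := by
          rw [div_div_eq_mul_div, mul_comm]
          ring
  have h1 := key x
  have h2 := key (-x)
  rw [Real.cosh_eq, Real.cosh_eq]
  rw [show (p - 1) / p * -x = -((p - 1) / p * x) by ring] at h2
  nlinarith [h1, h2]

theorem magical_estimate_perspective (s : ℝ) (w : ℝ) (hw : 0 < w) (p : ℝ) (hp : 1 < p) :
    (w ≤ 1 → Cfun s ≤ w * Cfun (s / w)) ∧
    (1 ≤ w → (p - 1) / p * Cfun s - 4 * (p - 1) * Ufun p w ≤ w * Cfun (s / w)) := by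
  have hM : Real.cosh (Real.arsinh (s / 2)) = Real.sqrt (s ^ 2 + 4) / 2 := by
    rw [Real.cosh_arsinh, sqrt_helper]
  have hroot2 : (2:ℝ) ≤ Real.sqrt (s ^ 2 + 4) := by
    rw [show (2:ℝ) = Real.sqrt 4 by
      rw [show (4:ℝ) = 2 ^ 2 by norm_num, Real.sqrt_sq]; norm_num]
    exact Real.sqrt_le_sqrt (by nlinarith)
  constructor
  · intro hw1
    have hy := young_C (s / w) (2 * Real.arsinh (s / 2))
    rw [show 2 * Real.arsinh (s / 2) / 2 = Real.arsinh (s / 2) by ring, hM] at hy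
    have hww : w * (2 * Real.arsinh (s / 2) * (s / w)) = 2 * Real.arsinh (s / 2) * s := by
      field_simp
    have hy' : 2 * Real.arsinh (s / 2) * s ≤
        w * (Cfun (s / w) + (4 * (Real.sqrt (s ^ 2 + 4) / 2) - 4)) := by
      rw [← hww]; exact mul_le_mul_of_nonneg_left hy hw.le
    have hexp : w * (Cfun (s / w) + (4 * (Real.sqrt (s ^ 2 + 4) / 2) - 4))
        = w * Cfun (s / w) + 2 * (w * Real.sqrt (s ^ 2 + 4)) - 4 * w := by ring
    have hCs : Cfun s = 2 * Real.arsinh (s / 2) * s - 2 * Real.sqrt (s ^ 2 + 4) + 4 := by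
      unfold Cfun; ring
    have hprod : (0:ℝ) ≤ (1 - w) * (Real.sqrt (s ^ 2 + 4) - 2) :=
      mul_nonneg (by linarith) (by linarith)
    nlinarith [hy', hexp, hCs, hprod]
  · intro hw1
    set x := Real.arsinh (s / 2) with hx
    set lam := (p - 1) / p with hlam
    have hy := young_C (s / w) (lam * (2 * x))
    rw [show lam * (2 * x) / 2 = lam * x by ring] at hy
    have hww : w * (lam * (2 * x) * (s / w)) = lam * (2 * x) * s := by
      field_simp
    have hy' : lam * (2 * x) * s ≤
        w * (Cfun (s / w) + (4 * Real.cosh (lam * x) - 4)) := by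
      rw [← hww]; exact mul_le_mul_of_nonneg_left hy hw.le
    have hk := key_cosh hp hw.le x
    rw [hM, ← hlam] at hk
    have hppos : (0:ℝ) < p := by linarith
    have hexp : w * (Cfun (s / w) + (4 * Real.cosh (lam * x) - 4))
        = w * Cfun (s / w) + 4 * (w * Real.cosh (lam * x)) - 4 * w := by ring
    have hCs : lam * Cfun s
        = lam * (2 * x) * s - 2 * (lam * Real.sqrt (s ^ 2 + 4)) + 4 * lam := by
      unfold Cfun; ring
    have hkk : 4 * (w * Real.cosh (lam * x))
        ≤ 4 * (w ^ p / p) + 2 * (lam * Real.sqrt (s ^ 2 + 4)) := by linarith [hk]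
    have h0 : p ≠ 0 := hppos.ne'
    have h1 : p - 1 ≠ 0 := by intro h; rw [sub_eq_zero] at h; exact absurd h.symm hp.ne
    have hU4 : 4 * (p - 1) * Ufun p w = 4 * (w ^ p / p) - 4 * w + 4 - 4 / p := by
      unfold Ufun; field_simp
    have hlam2 : 4 * lam = 4 - 4 / p := by rw [hlam]; field_simp
    linarith [hy', hexp, hCs, hkk, hU4, hlam2]
end

section
/- Let λ_B(r) = r·log r − r + 1 for r > 0, and for p > 1 let U_p(w) = (w^p − p·w + p − 1)/(p·(p−1)). Then for all c > 0, w > 0, and p > 1, one has the identity w·λ_B(c/w) = ((p−1)/p)·λ_B(c) − (p−1)·U_p(w) + (1/p)·w^p·λ_B(c/w^p); in particular w·λ_B(c/w) ≥ ((p−1)/p)·λ_B(c) − (p−1)·U_p(w). -/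
/-- The Boltzmann function `λ_B(r) = r log r - r + 1`. -/
noncomputable def lamB (r : ℝ) : ℝ := r * Real.log r - r + 1

lemma lamB_nonneg {r : ℝ} (hr : 0 < r) : 0 ≤ lamB r := by
  have h := Real.log_le_sub_one_of_pos (x := 1 / r) (by positivity)
  rw [Real.log_div one_ne_zero hr.ne', Real.log_one] at h
  have : 1 - 1 / r ≤ Real.log r := by linarith
  have h2 : r * (1 - 1 / r) ≤ r * Real.log r := by
    exact mul_le_mul_of_nonneg_left this hr.le
  have h3 : r * (1 - 1 / r) = r - 1 := by field_simp
  unfold lamB; nlinarith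

theorem boltzmann_perspective_identity (c w p : ℝ) (hc : 0 < c) (hw : 0 < w) (hp : 1 < p) :
    w * lamB (c / w)
        = (p - 1) / p * lamB c - (p - 1) * Ufun p w + 1 / p * w ^ p * lamB (c / w ^ p) ∧
      (p - 1) / p * lamB c - (p - 1) * Ufun p w ≤ w * lamB (c / w) := by
  have hp0 : (0:ℝ) < p := lt_trans one_pos hp
  have hp1 : p - 1 ≠ 0 := by linarith
  have hwp : (0:ℝ) < w ^ p := Real.rpow_pos_of_pos hw p
  have h1 : Real.log (c / w) = Real.log c - Real.log w := Real.log_div hc.ne' hw.ne'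
  have h2 : Real.log (c / w ^ p) = Real.log c - p * Real.log w := by
    rw [Real.log_div hc.ne' hwp.ne', Real.log_rpow hw]
  have hid : w * lamB (c / w)
      = (p - 1) / p * lamB c - (p - 1) * Ufun p w + 1 / p * w ^ p * lamB (c / w ^ p) := by
    unfold lamB Ufun
    rw [h1, h2]
    field_simp
    ring
  refine ⟨hid, ?_⟩
  rw [hid]
  have h3 : 0 ≤ 1 / p * w ^ p * lamB (c / w ^ p) := by
    have := lamB_nonneg (r := c / w ^ p) (by positivity)
    positivity
  linarith
end

section
/- For every real s, the value C(s) = 2·s·arsinh(s/2) − 2·√(s² + 4) + 4 is the least element of the set { 2·λ_B(a) + 2·λ_B(b) : a ≥ 0, b ≥ 0, a − b = s }, where λ_B(r) = r·log r − r + 1 for r > 0 and λ_B(0) = 1; in particular the minimum is attained and equals C(s). -/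
lemma young_lamB (r σ : ℝ) (hr : 0 ≤ r) :
    r * σ - Real.exp σ ≤ r * Real.log r - r := by
  rcases eq_or_lt_of_le hr with h | h
  · simp [← h]
    positivity
  · have h1 : σ - Real.log r + 1 ≤ Real.exp (σ - Real.log r) :=
      Real.add_one_le_exp _
    have h2 : Real.exp (σ - Real.log r) = Real.exp σ / r := by
      rw [Real.exp_sub, Real.exp_log h]
    rw [h2] at h1
    have h3 : r * (σ - Real.log r + 1) ≤ Real.exp σ := by
      have := mul_le_mul_of_nonneg_left h1 h.le
      rwa [mul_div_cancel₀ _ (ne_of_gt h)] at this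
    nlinarith

lemma sqrt_s2 (s : ℝ) : Real.sqrt (s ^ 2 + 4) = 2 * Real.sqrt (1 + (s / 2) ^ 2) := by
  rw [show s ^ 2 + 4 = 2 ^ 2 * (1 + (s / 2) ^ 2) by ring, Real.sqrt_mul (by positivity),
    Real.sqrt_sq (by norm_num)]

theorem Cfun_infimal_convolution (s : ℝ) :
    IsLeast {y : ℝ | ∃ a b : ℝ, 0 ≤ a ∧ 0 ≤ b ∧ a - b = s ∧ y = 2 * lamB a + 2 * lamB b}
      (Cfun s) := by
  set σ := Real.arsinh (s / 2) with hσ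
  have hsinh : Real.sinh σ = s / 2 := Real.sinh_arsinh _
  have hcosh : Real.cosh σ = Real.sqrt (1 + (s / 2) ^ 2) := Real.cosh_arsinh _
  have hsum : Real.exp σ + Real.exp (-σ) = Real.sqrt (s ^ 2 + 4) := by
    have := Real.cosh_eq σ
    rw [sqrt_s2 s, ← hcosh, Real.cosh_eq]; ring
  have hdiff : Real.exp σ - Real.exp (-σ) = s := by
    have := Real.sinh_eq σ
    rw [hsinh] at this; linarith
  constructor
  · refine ⟨Real.exp σ, Real.exp (-σ), (Real.exp_pos _).le, (Real.exp_pos _).le, hdiff, ?_⟩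
    simp only [lamB, Real.log_exp, Cfun, ← hσ]
    linear_combination -2 * σ * hdiff + 2 * hsum
  · rintro y ⟨a, b, ha, hb, hab, rfl⟩
    have h1 := young_lamB a σ ha
    have h2 := young_lamB b (-σ) hb
    simp only [lamB, Cfun, ← hσ]
    have hσs : σ * (a - b) = σ * s := by rw [hab]
    nlinarith [h1, h2, hsum, hσs]
end

section
/- Let φ : ℝ → [0, ∞) be even, differentiable, superlinear (φ(s)/|s| → ∞ as |s| → ∞) and satisfy s·φ'(s) ≥ φ(s) for all s, and let ψ : [0, ∞) → [0, ∞) be non-decreasing and superlinear (ψ(w)/w → ∞ as w → ∞). Then the function Ξ(s) := inf_{w>0} { w·φ(s/w) + ψ(w) } is even, non-decreasing on [0, ∞), and superlinear (Ξ(s)/|s| → ∞ as |s| → ∞). -/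
theorem superlinear_infimal_convolution (φ ψ : ℝ → ℝ)
    (hφ_nonneg : ∀ s, 0 ≤ φ s)
    (hφ_even : ∀ s, φ (-s) = φ s)
    (hφ_diff : Differentiable ℝ φ)
    (hφ_super : ∀ M : ℝ, ∃ R : ℝ, ∀ s : ℝ, R ≤ |s| → M ≤ φ s / |s|)
    (hφ_elem : ∀ s, φ s ≤ s * deriv φ s)
    (hψ_nonneg : ∀ w, 0 ≤ w → 0 ≤ ψ w)
    (hψ_mono : ∀ w₁ w₂, 0 ≤ w₁ → w₁ ≤ w₂ → ψ w₁ ≤ ψ w₂)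
    (hψ_super : ∀ M : ℝ, ∃ R : ℝ, ∀ w : ℝ, R ≤ w → M ≤ ψ w / w)
    (Ξ : ℝ → ℝ)
    (hΞ : ∀ s, Ξ s = sInf {y : ℝ | ∃ w : ℝ, 0 < w ∧ y = w * φ (s / w) + ψ w}) :
    (∀ s, Ξ (-s) = Ξ s) ∧
      MonotoneOn Ξ (Set.Ici 0) ∧
      (∀ M : ℝ, ∃ R : ℝ, ∀ s : ℝ, R ≤ |s| → M ≤ Ξ s / |s|) := by
  set S : ℝ → Set ℝ := fun s => {y : ℝ | ∃ w : ℝ, 0 < w ∧ y = w * φ (s / w) + ψ w} with hS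
  have hne : ∀ s, (S s).Nonempty := fun s => ⟨1 * φ (s / 1) + ψ 1, 1, one_pos, rfl⟩
  have hbdd : ∀ s, ∀ y ∈ S s, (0:ℝ) ≤ y := by
    rintro s y ⟨w, hw, rfl⟩
    have := hψ_nonneg w hw.le
    have := hφ_nonneg (s / w)
    nlinarith
  have hbdd' : ∀ s, BddBelow (S s) := fun s => ⟨0, fun y hy => hbdd s y hy⟩
  have hmono : MonotoneOn φ (Set.Ici 0) := by
    apply monotoneOn_of_deriv_nonneg (convex_Ici 0) hφ_diff.continuous.continuousOn
      (fun x _ => (hφ_diff x).differentiableWithinAt)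
    intro x hx
    rw [interior_Ici] at hx
    have h1 := hφ_elem x
    have h2 := hφ_nonneg x
    nlinarith [Set.mem_Ioi.mp hx]
  refine ⟨?_, ?_, ?_⟩
  · intro s
    rw [hΞ, hΞ]
    congr 1
    ext y
    constructor <;> rintro ⟨w, hw, rfl⟩ <;> refine ⟨w, hw, ?_⟩
    · rw [neg_div, hφ_even]
    · rw [neg_div, hφ_even]
  · intro a ha b hb hab
    rw [hΞ, hΞ]
    apply le_csInf (hne b)
    rintro y ⟨w, hw, rfl⟩
    have h1 : w * φ (a / w) + ψ w ∈ S a := ⟨w, hw, rfl⟩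
    refine le_trans (csInf_le (hbdd' a) h1) ?_
    have : φ (a / w) ≤ φ (b / w) :=
      hmono (Set.mem_Ici.mpr (div_nonneg ha hw.le))
        (Set.mem_Ici.mpr (div_nonneg (le_trans ha hab) hw.le)) (by gcongr)
    nlinarith
  · intro M
    set M' : ℝ := max M 1 with hM'
    have hM'pos : 0 < M' := lt_of_lt_of_le one_pos (le_max_right _ _)
    obtain ⟨R₁, hR₁⟩ := hφ_super M'
    set R₁' : ℝ := max R₁ 1 with hR₁'
    have hR₁'pos : 0 < R₁' := lt_of_lt_of_le one_pos (le_max_right _ _)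
    obtain ⟨R₂, hR₂⟩ := hψ_super (M' * R₁')
    set R₂' : ℝ := max R₂ 0 with hR₂'
    refine ⟨max (R₁' * R₂') 1, fun s hs => ?_⟩
    have hs1 : (1:ℝ) ≤ |s| := le_trans (le_max_right _ _) hs
    have hspos : 0 < |s| := lt_of_lt_of_le one_pos hs1
    have key : M' * |s| ≤ Ξ s := by
      rw [hΞ]
      apply le_csInf (hne s)
      rintro y ⟨w, hw, rfl⟩
      have habs : |s / w| = |s| / w := by
        rw [abs_div, abs_of_pos hw]
      by_cases hcase : R₁' ≤ |s / w|
      · have h1 : M' ≤ φ (s / w) / |s / w| :=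
          hR₁ (s / w) (le_trans (le_max_left _ _) hcase)
        have habspos : 0 < |s / w| := lt_of_lt_of_le hR₁'pos hcase
        have h2 : M' * |s / w| ≤ φ (s / w) := (le_div_iff₀ habspos).mp h1
        have h3 : M' * |s| ≤ w * φ (s / w) := by
          rw [habs] at h2
          have hw0 : w ≠ 0 := hw.ne'
          calc M' * |s| = w * (M' * (|s| / w)) := by field_simp
            _ ≤ w * φ (s / w) := mul_le_mul_of_nonneg_left h2 hw.le
        nlinarith [hψ_nonneg w hw.le]
      · push_neg at hcase
        rw [habs, div_lt_iff₀ hw] at hcase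
        -- |s| < R₁' * w, and |s| ≥ R₁' * R₂', so w > R₂' ≥ R₂
        have hwR : R₂' < w := by
          have h4 : R₁' * R₂' ≤ |s| := le_trans (le_max_left _ _) hs
          nlinarith
        have h5 : M' * R₁' ≤ ψ w / w := hR₂ w (le_of_lt (lt_of_le_of_lt (le_max_left _ _) hwR))
        have h6 : M' * R₁' * w ≤ ψ w := by
          rw [le_div_iff₀ hw] at h5; exact h5
        have h7 : M' * |s| ≤ ψ w := by
          nlinarith
        nlinarith [mul_nonneg hw.le (hφ_nonneg (s / w))]
    calc M ≤ M' := le_max_left _ _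
      _ = M' * |s| / |s| := by field_simp
      _ ≤ Ξ s / |s| := by gcongr
end

section
/- Let σ > 0 and C(s) = 2·s·arsinh(s/2) − 2·√(s² + 4) + 4. Then for every real j and all a, b ≥ σ one has |a·C(j/a) − b·C(j/b)| ≤ (2·|j|/σ)·|a − b|. -/
/-!
The derivative of the perspective `a ↦ a * C (j / a)` is `C s - s * C' s` at `s = j / a`.
Since `C' s = 2 arsinh (s / 2)`, this is `4 - 2 √(s² + 4)` (i.e. `-C* (C' s)`), whose absolute value
is at most `2 |s| = 2 |j| / a ≤ 2 |j| / σ`; the mean value inequality on `[σ, ∞)` concludes.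
-/

open Real

theorem HasDerivAt.perspective {f : ℝ → ℝ} {f' j a : ℝ} (ha : a ≠ 0)
    (hf : HasDerivAt f f' (j / a)) :
    HasDerivAt (fun x => x * f (j / x)) (f (j / a) - j / a * f') a := by
  have hquot : HasDerivAt (fun x => j / x) (-(j / a ^ 2)) a := by
    simpa [div_eq_mul_inv] using (hasDerivAt_inv ha).const_mul j
  refine ((hasDerivAt_id a).mul (hf.comp a hquot)).congr_deriv ?_
  simp only [id, one_mul, Function.comp_apply]
  field_simp
  ring

theorem sqrt_one_add_half_sq (s : ℝ) : √(1 + (s / 2) ^ 2) = √(s ^ 2 + 4) / 2 := by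
  rw [show 1 + (s / 2) ^ 2 = (s ^ 2 + 4) / 2 ^ 2 by ring,
    sqrt_div' _ (by norm_num : (0 : ℝ) ≤ 2 ^ 2), sqrt_sq (by norm_num)]

theorem hasDerivAt_Cfun (s : ℝ) : HasDerivAt Cfun (2 * arsinh (s / 2)) s := by
  have hpos : 0 < s ^ 2 + 4 := by positivity
  have harsinh : HasDerivAt (fun x => arsinh (x / 2)) ((√(1 + (s / 2) ^ 2))⁻¹ * (1 / 2)) s :=
    (hasDerivAt_arsinh _).comp s ((hasDerivAt_id s).div_const 2)
  have hsqrt : HasDerivAt (fun x => √(x ^ 2 + 4)) (2 * s / (2 * √(s ^ 2 + 4))) s := by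
    simpa using ((hasDerivAt_pow 2 s).add_const 4).sqrt hpos.ne'
  refine ((((hasDerivAt_id s).const_mul 2).mul harsinh).sub (hsqrt.const_mul 2)).add_const 4
    |>.congr_deriv ?_
  rw [sqrt_one_add_half_sq]
  field_simp [(sqrt_pos.2 hpos).ne']
  simp

theorem Cfun_sub_mul_deriv (s : ℝ) :
    Cfun s - s * (2 * arsinh (s / 2)) = 4 - 2 * √(s ^ 2 + 4) := by
  unfold Cfun; ring

theorem abs_four_sub_two_sqrt_sq_add_four_le (s : ℝ) : |4 - 2 * √(s ^ 2 + 4)| ≤ 2 * |s| := by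
  have hlow : 2 ≤ √(s ^ 2 + 4) :=
    le_sqrt_of_sq_le (by nlinarith [sq_nonneg s])
  have hupp : √(s ^ 2 + 4) ≤ |s| + 2 :=
    sqrt_le_iff.2 ⟨by positivity, by nlinarith [sq_abs s, abs_nonneg s]⟩
  rw [abs_of_nonpos (by linarith)]
  linarith

theorem perspective_lipschitz (σ : ℝ) (hσ : 0 < σ) (j a b : ℝ) (ha : σ ≤ a) (hb : σ ≤ b) :
    |a * Cfun (j / a) - b * Cfun (j / b)| ≤ 2 * |j| / σ * |a - b| := by
  have hderiv : ∀ x ∈ Set.Ici σ, HasDerivWithinAt (fun x => x * Cfun (j / x))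
      (4 - 2 * √((j / x) ^ 2 + 4)) (Set.Ici σ) x := fun x hx => by
    rw [← Cfun_sub_mul_deriv]
    exact ((hasDerivAt_Cfun _).perspective (hσ.trans_le hx).ne').hasDerivWithinAt
  have hbound : ∀ x ∈ Set.Ici σ, ‖4 - 2 * √((j / x) ^ 2 + 4)‖ ≤ 2 * |j| / σ :=
      fun x (hσx : σ ≤ x) => by
    have hx : 0 < x := hσ.trans_le hσx
    calc ‖4 - 2 * √((j / x) ^ 2 + 4)‖ ≤ 2 * |j / x| := abs_four_sub_two_sqrt_sq_add_four_le _
      _ = 2 * |j| / x := by rw [abs_div, abs_of_pos hx, mul_div_assoc]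
      _ ≤ 2 * |j| / σ := div_le_div_of_nonneg_left (by positivity) hσ hσx
  simpa [norm_eq_abs] using
    (convex_Ici σ).norm_image_sub_le_of_norm_hasDerivWithin_le hderiv hbound hb ha
end

section
/- Let 1 < γ < 2 < ω, and on the interval (0, 1/2) define s(x) = 1/(x·(log(1/x))^γ) and w(x) = 1/(x·(log(1/x))^ω). Then: (i) ∫₀^{1/2} λ_B(w(x)) dx < ∞, (ii) ∫₀^{1/2} w(x)·C(s(x)/w(x)) dx < ∞, but (iii) ∫₀^{1/2} C(s(x)) dx = ∞, where C(s) = 2·s·arsinh(s/2) − 2·√(s² + 4) + 4 and λ_B(r) = r·log r − r + 1. -/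
open MeasureTheory

/-!
Substituting `x = exp (-t)` turns `dx` into `exp (-t) dt` and `1 / (x * log (1 / x) ^ p)` into
`exp t / t ^ p`, so all three integrals become integrals over `(log 2, ∞)` of functions comparable
with powers of `t`. From `λ_B(r) ≤ r log r + 1` and `log w = t - ω log t`, the first integrand is
`O(t ^ (1 - ω))`. From `C(σ) ≤ 2 σ log (1 + σ)` and `s / w = t ^ (ω - γ)`, the second is
`O(t ^ (-γ + δ))` for every `δ > 0`. From `C(s) ≥ 2 s (log s - 1)`, the third is at least
`t ^ (1 - γ)` for `t ≥ 64`, which is not integrable at infinity when `γ ≤ 2`.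
-/

open Real Set

lemma image_exp_neg_Ioi (a : ℝ) : (fun t ↦ exp (-t)) '' Ioi a = Ioo 0 (exp (-a)) := by
  rw [← image_exp_Iio, ← image_neg_Ioi, image_image]

lemma lintegral_Ioo_exp_neg_eq (a : ℝ) (g : ℝ → ENNReal) :
    ∫⁻ x in Ioo 0 (exp (-a)), g x = ∫⁻ t in Ioi a, ENNReal.ofReal (exp (-t)) * g (exp (-t)) := by
  rw [← image_exp_neg_Ioi, lintegral_image_eq_lintegral_abs_deriv_mul measurableSet_Ioi
    (fun t _ ↦ (hasDerivAt_neg t).exp.hasDerivWithinAt) (exp_injective.comp neg_injective).injOn]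
  simp [abs_of_pos (exp_pos _)]

lemma lintegral_Ioo_zero_half_eq (f : ℝ → ℝ) :
    ∫⁻ x in Ioo 0 (1 / 2), ENNReal.ofReal (f x) =
      ∫⁻ t in Ioi (log 2), ENNReal.ofReal (exp (-t) * f (exp (-t))) := by
  rw [show (1 / 2 : ℝ) = exp (-log 2) by rw [exp_neg, exp_log two_pos, one_div],
    lintegral_Ioo_exp_neg_eq]
  simp_rw [ENNReal.ofReal_mul (exp_pos _).le]

lemma setLIntegral_ofReal_lt_top_of_le {α : Type*} [MeasurableSpace α] {μ : Measure α}
    {s : Set α} {f g : α → ℝ} (hs : MeasurableSet s) (hg : IntegrableOn g s μ)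
    (hfg : ∀ x ∈ s, f x ≤ g x) : ∫⁻ x in s, ENNReal.ofReal (f x) ∂μ < ⊤ :=
  (setLIntegral_mono' hs fun x hx ↦ ENNReal.ofReal_le_ofReal (hfg x hx)).trans_lt
    hg.setLIntegral_lt_top

lemma lintegral_Ioi_ofReal_rpow_eq_top {a p : ℝ} (ha : 0 < a) (hp : -1 ≤ p) :
    ∫⁻ t in Ioi a, ENNReal.ofReal (t ^ p) = ⊤ := by
  by_contra h
  refine (integrableOn_Ioi_rpow_iff ha).not.2 hp.not_gt ?_
  refine (lintegral_ofReal_ne_top_iff_integrable ?_ ?_).1 h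
  · exact (continuousOn_id.rpow_const fun t ht ↦ Or.inl (ha.trans ht).ne').aestronglyMeasurable
      measurableSet_Ioi
  · exact (ae_restrict_iff' measurableSet_Ioi).2
      (ae_of_all _ fun t ht ↦ rpow_nonneg (ha.trans ht).le _)

lemma lamB_le_mul_log_add_one {r : ℝ} (hr : 0 ≤ r) : lamB r ≤ r * log r + 1 := by
  rw [lamB]; linarith

lemma Cfun_le_mul_arsinh (σ : ℝ) : Cfun σ ≤ 2 * σ * arsinh (σ / 2) := by
  have : 2 ≤ √(σ ^ 2 + 4) := by
    rw [show (2 : ℝ) = √(2 ^ 2) by rw [sqrt_sq zero_le_two]]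
    exact sqrt_le_sqrt (by nlinarith)
  rw [Cfun]; linarith

lemma arsinh_half_le_log_one_add {σ : ℝ} (hσ : 0 ≤ σ) : arsinh (σ / 2) ≤ log (1 + σ) := by
  have : √(1 + (σ / 2) ^ 2) ≤ 1 + σ / 2 := by
    rw [sqrt_le_left (by positivity)]
    nlinarith
  exact log_le_log (by positivity) (by linarith)

lemma log_one_add_le_rpow {x ε : ℝ} (hx : 0 ≤ x) (hε : 0 < ε) (hε1 : ε ≤ 1) :
    log (1 + x) ≤ (1 + x ^ ε) / ε := by
  calc log (1 + x) ≤ (1 + x) ^ ε / ε := log_le_rpow_div (by positivity) hε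
    _ ≤ (1 + x ^ ε) / ε := by
      gcongr
      simpa using rpow_add_le_add_rpow zero_le_one hx hε.le hε1

lemma Cfun_le_rpow {σ ε : ℝ} (hσ : 0 ≤ σ) (hε : 0 < ε) (hε1 : ε ≤ 1) :
    Cfun σ ≤ 2 / ε * σ * (1 + σ ^ ε) :=
  calc Cfun σ ≤ 2 * σ * arsinh (σ / 2) := Cfun_le_mul_arsinh σ
    _ ≤ 2 * σ * ((1 + σ ^ ε) / ε) := by
      gcongr
      exact (arsinh_half_le_log_one_add hσ).trans (log_one_add_le_rpow hσ hε hε1)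
    _ = 2 / ε * σ * (1 + σ ^ ε) := by ring

lemma mul_log_sub_one_le_Cfun {s : ℝ} (hs : 0 < s) : 2 * s * (log s - 1) ≤ Cfun s := by
  have harsinh : log s ≤ arsinh (s / 2) := by
    refine log_le_log hs ?_
    have : s / 2 ≤ √(1 + (s / 2) ^ 2) := le_sqrt_of_sq_le (by linarith)
    linarith
  have hsqrt : √(s ^ 2 + 4) ≤ s + 2 := by
    rw [sqrt_le_left (by linarith)]
    nlinarith
  have := mul_le_mul_of_nonneg_left harsinh (by positivity : (0 : ℝ) ≤ 2 * s)
  rw [Cfun]; nlinarith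

lemma neg_log_le_inv {t : ℝ} (ht : 0 < t) : -log t ≤ t⁻¹ := by
  have := log_le_sub_one_of_pos (inv_pos.2 ht)
  rw [log_inv] at this
  linarith

lemma four_mul_log_add_two_le {t : ℝ} (ht : 64 ≤ t) : 4 * log t + 2 ≤ t := by
  have ht0 : 0 < t := by linarith
  have hsqrt : 8 ≤ √t := by
    rw [show (8 : ℝ) = √(8 ^ 2) by rw [sqrt_sq (by norm_num)]]
    exact sqrt_le_sqrt (by linarith)
  have hlog : log t ≤ 2 * (√t - 1) := by
    have := log_le_sub_one_of_pos (sqrt_pos.2 ht0)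
    rw [log_sqrt ht0.le] at this
    linarith
  nlinarith [sq_sqrt ht0.le]

lemma log_one_div_exp_neg (t : ℝ) : log (1 / exp (-t)) = t := by
  rw [one_div, ← exp_neg, neg_neg, log_exp]

/-- `logProfile γ` and `logProfile ω` are the functions `s` and `w` of the statement. -/
noncomputable def logProfile (p x : ℝ) : ℝ := 1 / (x * log (1 / x) ^ p)

lemma logProfile_exp_neg_pos {t : ℝ} (ht : 0 < t) (p : ℝ) : 0 < logProfile p (exp (-t)) := by
  rw [logProfile, log_one_div_exp_neg]
  positivity

lemma exp_neg_mul_logProfile_exp_neg {t : ℝ} (ht : 0 < t) (p : ℝ) :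
    exp (-t) * logProfile p (exp (-t)) = t ^ (-p) := by
  rw [logProfile, log_one_div_exp_neg, rpow_neg ht.le]
  field_simp

lemma log_logProfile_exp_neg {t : ℝ} (ht : 0 < t) (p : ℝ) :
    log (logProfile p (exp (-t))) = t - p * log t := by
  rw [logProfile, log_one_div_exp_neg, one_div, log_inv,
    log_mul (exp_pos _).ne' (rpow_pos_of_pos ht p).ne', log_exp, log_rpow ht]
  ring

lemma logProfile_div_logProfile_exp_neg {t : ℝ} (ht : 0 < t) (p q : ℝ) :
    logProfile p (exp (-t)) / logProfile q (exp (-t)) = t ^ (q - p) := by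
  rw [logProfile, logProfile, log_one_div_exp_neg, rpow_sub ht]
  field_simp

lemma exp_neg_mul_lamB_logProfile_le {t p : ℝ} (ht : 0 < t) (hp : 0 ≤ p) :
    exp (-t) * lamB (logProfile p (exp (-t))) ≤
      t ^ (-p + 1) + p * t ^ (-p - 1) + exp (-t) := by
  set r := logProfile p (exp (-t))
  have hr : 0 < r := logProfile_exp_neg_pos ht p
  have hlog : log r ≤ t + p * t⁻¹ := by
    rw [log_logProfile_exp_neg ht]
    nlinarith [mul_le_mul_of_nonneg_left (neg_log_le_inv ht) hp]
  calc exp (-t) * lamB r ≤ exp (-t) * (r * (t + p * t⁻¹) + 1) := by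
        gcongr
        exact (lamB_le_mul_log_add_one hr.le).trans (by gcongr)
    _ = t ^ (-p) * (t + p * t⁻¹) + exp (-t) := by
        rw [← exp_neg_mul_logProfile_exp_neg ht]; ring
    _ = t ^ (-p + 1) + p * t ^ (-p - 1) + exp (-t) := by
        rw [rpow_add_one ht.ne', rpow_sub_one ht.ne']; ring

lemma exp_neg_mul_perspective_Cfun_logProfile_le {t γ ω ε : ℝ} (ht : 0 < t) (hε : 0 < ε)
    (hε1 : ε ≤ 1) :
    exp (-t) * (logProfile ω (exp (-t)) *
        Cfun (logProfile γ (exp (-t)) / logProfile ω (exp (-t)))) ≤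
      2 / ε * (t ^ (-γ) + t ^ (-γ + (ω - γ) * ε)) := by
  rw [← mul_assoc, exp_neg_mul_logProfile_exp_neg ht, logProfile_div_logProfile_exp_neg ht]
  calc t ^ (-ω) * Cfun (t ^ (ω - γ))
      ≤ t ^ (-ω) * (2 / ε * t ^ (ω - γ) * (1 + (t ^ (ω - γ)) ^ ε)) := by
        gcongr
        exact Cfun_le_rpow (rpow_nonneg ht.le _) hε hε1
    _ = 2 / ε * (t ^ (-γ) + t ^ (-γ + (ω - γ) * ε)) := by
        rw [← rpow_mul ht.le, rpow_add ht, show -γ = -ω + (ω - γ) by ring, rpow_add ht]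
        ring

lemma rpow_one_sub_le_exp_neg_mul_Cfun_logProfile {t γ : ℝ} (ht : 64 ≤ t) (hγ : γ ≤ 2) :
    t ^ (1 - γ) ≤ exp (-t) * Cfun (logProfile γ (exp (-t))) := by
  have ht0 : 0 < t := by linarith
  set s := logProfile γ (exp (-t))
  have hlog : 0 ≤ log t := log_nonneg (by linarith)
  calc t ^ (1 - γ) = t ^ (-γ) * t := by rw [← rpow_add_one ht0.ne']; ring_nf
    _ ≤ t ^ (-γ) * (2 * (t - γ * log t - 1)) := by
        gcongr
        nlinarith [four_mul_log_add_two_le ht, mul_le_mul_of_nonneg_right hγ hlog]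
    _ = exp (-t) * (2 * s * (log s - 1)) := by
        rw [log_logProfile_exp_neg ht0, ← exp_neg_mul_logProfile_exp_neg ht0]; ring
    _ ≤ exp (-t) * Cfun s := by
        gcongr
        exact mul_log_sub_one_le_Cfun (logProfile_exp_neg_pos ht0 γ)

lemma lintegral_lamB_logProfile_lt_top {ω : ℝ} (hω : 2 < ω) :
    ∫⁻ x in Ioo 0 (1 / 2), ENNReal.ofReal (lamB (logProfile ω x)) < ⊤ := by
  have hlog2 : 0 < log 2 := log_pos one_lt_two
  rw [lintegral_Ioo_zero_half_eq]
  refine setLIntegral_ofReal_lt_top_of_le measurableSet_Ioi ?_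
    fun t ht ↦ exp_neg_mul_lamB_logProfile_le (hlog2.trans ht) (by linarith)
  exact ((integrableOn_Ioi_rpow_of_lt (by linarith) hlog2).add
    ((integrableOn_Ioi_rpow_of_lt (by linarith) hlog2).const_mul ω)).add
    (integrableOn_exp_neg_Ioi _)

lemma lintegral_perspective_Cfun_logProfile_lt_top {γ ω : ℝ} (hγ : 1 < γ) (hγω : γ ≤ ω) :
    ∫⁻ x in Ioo 0 (1 / 2),
      ENNReal.ofReal (logProfile ω x * Cfun (logProfile γ x / logProfile ω x)) < ⊤ := by
  have hlog2 : 0 < log 2 := log_pos one_lt_two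
  have hω : 0 < ω := by linarith
  set ε := (γ - 1) / (2 * ω)
  have hε : 0 < ε := div_pos (by linarith) (by linarith)
  have hε1 : ε ≤ 1 := (div_le_one (by linarith)).2 (by linarith)
  have hexp : -γ + (ω - γ) * ε < -1 := by
    have hωε : ω * ε = (γ - 1) / 2 := by simp only [ε]; field_simp
    nlinarith [mul_le_mul_of_nonneg_right (by linarith : ω - γ ≤ ω) hε.le]
  rw [lintegral_Ioo_zero_half_eq]
  refine setLIntegral_ofReal_lt_top_of_le measurableSet_Ioi ?_
    fun t ht ↦ exp_neg_mul_perspective_Cfun_logProfile_le (hlog2.trans ht) hε hε1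
  exact ((integrableOn_Ioi_rpow_of_lt (by linarith) hlog2).add
    (integrableOn_Ioi_rpow_of_lt hexp hlog2)).const_mul _

lemma lintegral_Cfun_logProfile_eq_top {γ : ℝ} (hγ : γ ≤ 2) :
    ∫⁻ x in Ioo 0 (1 / 2), ENNReal.ofReal (Cfun (logProfile γ x)) = ⊤ := by
  have hlog2 : log 2 ≤ 64 := by linarith [log_le_sub_one_of_pos two_pos]
  rw [lintegral_Ioo_zero_half_eq, eq_top_iff,
    ← lintegral_Ioi_ofReal_rpow_eq_top (by norm_num : (0 : ℝ) < 64) (by linarith : -1 ≤ 1 - γ)]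
  calc ∫⁻ t in Ioi 64, ENNReal.ofReal (t ^ (1 - γ))
      ≤ ∫⁻ t in Ioi 64, ENNReal.ofReal (exp (-t) * Cfun (logProfile γ (exp (-t)))) :=
        setLIntegral_mono' measurableSet_Ioi fun t ht ↦ ENNReal.ofReal_le_ofReal
          (rpow_one_sub_le_exp_neg_mul_Cfun_logProfile (le_of_lt ht) hγ)
    _ ≤ ∫⁻ t in Ioi (log 2), ENNReal.ofReal (exp (-t) * Cfun (logProfile γ (exp (-t)))) :=
        lintegral_mono_set (Ioi_subset_Ioi hlog2)

theorem counterexample_magical_estimate_q_one (γ ω : ℝ) (hγ1 : 1 < γ) (hγ2 : γ < 2)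
    (hω : 2 < ω) :
    (∫⁻ x in Set.Ioo (0 : ℝ) (1 / 2),
        ENNReal.ofReal (lamB (1 / (x * Real.log (1 / x) ^ ω))) < ⊤) ∧
    (∫⁻ x in Set.Ioo (0 : ℝ) (1 / 2),
        ENNReal.ofReal ((1 / (x * Real.log (1 / x) ^ ω)) *
          Cfun ((1 / (x * Real.log (1 / x) ^ γ)) / (1 / (x * Real.log (1 / x) ^ ω)))) < ⊤) ∧
    (∫⁻ x in Set.Ioo (0 : ℝ) (1 / 2),
        ENNReal.ofReal (Cfun (1 / (x * Real.log (1 / x) ^ γ))) = ⊤) :=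
  ⟨lintegral_lamB_logProfile_lt_top hω,
    lintegral_perspective_Cfun_logProfile_lt_top hγ1 (by linarith),
    lintegral_Cfun_logProfile_eq_top hγ2.le⟩
end

section
/- Let n ∈ ℕ, T > 0, and w ∈ (0, ∞)^n. Let c : [0, T] → ℝ^n with c_i(t) ≥ 0 for all i and t, and suppose there exist integrable functions v_i ∈ L¹(0, T) with c_i(t) = c_i(0) + ∫₀ᵗ v_i(r) dr for all t ∈ [0, T] and all i. Define b(a, s) = s·log a for a > 0 and b(0, s) = 0, and B(c, v) = Σ_{i=1}^n b(c_i/w_i, v_i). If t ↦ B(c(t), v(t)) is integrable on (0, T), then for the relative entropy E(c) = Σ_{i=1}^n w_i·λ_B(c_i/w_i), with λ_B(r) = r·log r − r + 1 (λ_B(0) = 1), one has E(c(t)) − E(c(s)) = ∫ₛᵗ B(c(r), v(r)) dr for all 0 ≤ s ≤ t ≤ T; in particular t ↦ E(c(t)) is absolutely continuous with derivative B(c(t), v(t)) almost everywhere. -/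
open MeasureTheory

/-- `b(a, s) = s log a` for `a > 0` and `b(0, s) = 0`. -/
noncomputable def bfun (a s : ℝ) : ℝ := if 0 < a then s * Real.log a else 0

/-!
On an interval where `c_i > 0`, the map `y ↦ w_i λ_B(y / w_i)` is `C¹` near the compact range of
`c_i`, hence Lipschitz there; composed with the absolutely continuous `c_i` it is absolutely
continuous with derivative `log(c_i / w_i) v_i` almost everywhere, which gives the identity for that
coordinate. Only the sum `B` is assumed integrable, so one inducts on the set `A` of coordinates:
near a point where some coordinate of `A` is positive, those coordinates are handled as above and
the others by induction, their part of `B` being integrable as a difference of integrable functions.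
This gives the identity on every interval avoiding the closed set `Y` where all coordinates of `A`
vanish. On `Y` the entropy is constant and `B` vanishes, so the integral of `B` over each gap of `Y`
is zero, and summing over the countably many gaps carries the identity across `Y`.
-/

open Set Filter Topology intervalIntegral

theorem continuous_lamB : Continuous lamB :=
  (Real.continuous_mul_log.sub continuous_id).add continuous_const

@[simp] theorem lamB_zero : lamB 0 = 1 := by simp [lamB]

@[simp] theorem bfun_zero_left (s : ℝ) : bfun 0 s = 0 := by simp [bfun]

theorem bfun_of_pos {a : ℝ} (ha : 0 < a) (s : ℝ) : bfun a s = s * Real.log a := if_pos ha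

theorem hasDerivAt_mul_lamB_div {w x : ℝ} (hw : w ≠ 0) (hx : x ≠ 0) :
    HasDerivAt (fun y => w * lamB (y / w)) (Real.log (x / w)) x := by
  have hlamB : HasDerivAt lamB (Real.log (x / w)) (x / w) := by
    have h := ((Real.hasDerivAt_mul_log (div_ne_zero hx hw)).sub
      (hasDerivAt_id (x / w))).add_const 1
    rwa [add_sub_cancel_right] at h
  have h := (hlamB.comp x ((hasDerivAt_id x).div_const w)).const_mul w
  rwa [show w * (Real.log (x / w) * (1 / w)) = Real.log (x / w) by field_simp] at h

theorem LipschitzOnWith.comp_absolutelyContinuousOnInterval {X Y : Type*} [PseudoMetricSpace X]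
    [PseudoMetricSpace Y] {ψ : X → Y} {K : NNReal} {s : Set X} {f : ℝ → X} {a b : ℝ}
    (hψ : LipschitzOnWith K ψ s) (hf : AbsolutelyContinuousOnInterval f a b)
    (hfs : MapsTo f (uIcc a b) s) : AbsolutelyContinuousOnInterval (ψ ∘ f) a b := by
  rw [absolutelyContinuousOnInterval_iff] at hf ⊢
  intro ε hε
  obtain ⟨δ, hδ, hf⟩ := hf (ε / (K + 1)) (by positivity)
  refine ⟨δ, hδ, fun E hE hEδ => ?_⟩
  calc ∑ i ∈ Finset.range E.1, dist (ψ (f (E.2 i).1)) (ψ (f (E.2 i).2))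
      ≤ ∑ i ∈ Finset.range E.1, K * dist (f (E.2 i).1) (f (E.2 i).2) := by
        gcongr with i hi
        exact hψ.dist_le_mul _ (hfs (hE.1 i hi).1) _ (hfs (hE.1 i hi).2)
    _ = K * ∑ i ∈ Finset.range E.1, dist (f (E.2 i).1) (f (E.2 i).2) := by rw [Finset.mul_sum]
    _ ≤ K * (ε / (K + 1)) := by gcongr; exact (hf E hE hEδ).le
    _ < ε := by
        rw [mul_div_assoc', div_lt_iff₀ (by positivity)]
        nlinarith

section ChainRule

variable {u g ψ ψ' : ℝ → ℝ} {a b : ℝ} {s : Set ℝ}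

theorem continuousOn_of_eq_add_integral (hg : IntervalIntegrable g volume a b)
    (hu : ∀ x ∈ uIcc a b, u x = u a + ∫ t in a..x, g t) : ContinuousOn u (uIcc a b) :=
  (continuousOn_const.add
    (continuousOn_primitive_interval ((intervalIntegrable_iff').mp hg))).congr hu

theorem absolutelyContinuousOnInterval_comp_of_eq_add_integral
    (hg : IntervalIntegrable g volume a b) (hu : ∀ x ∈ uIcc a b, u x = u a + ∫ t in a..x, g t)
    (hψ : ∀ y ∈ s, HasDerivAt ψ (ψ' y) y) (hψ' : ContinuousOn ψ' s) (hus : MapsTo u (uIcc a b) s) :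
    AbsolutelyContinuousOnInterval (fun x => ψ (u a + ∫ t in a..x, g t)) a b := by
  have hu_cont := continuousOn_of_eq_add_integral hg hu
  have hKs : u '' uIcc a b ⊆ s := hus.image_subset
  have hK_convex : Convex ℝ (u '' uIcc a b) :=
    (isPreconnected_uIcc.image u hu_cont).ordConnected.convex
  obtain ⟨C, hC⟩ :=
    (isCompact_uIcc.image_of_continuousOn hu_cont).exists_bound_of_continuousOn (hψ'.mono hKs)
  have hψ_lip : LipschitzOnWith C.toNNReal ψ (u '' uIcc a b) :=
    hK_convex.lipschitzOnWith_of_nnnorm_hasDerivWithin_le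
      (fun y hy => (hψ y (hKs hy)).hasDerivWithinAt)
      (fun y hy => by
        rw [← NNReal.coe_le_coe, coe_nnnorm]
        exact (hC y hy).trans (Real.le_coe_toNNReal C))
  have hprim : AbsolutelyContinuousOnInterval (fun x => u a + ∫ t in a..x, g t) a b :=
    (LipschitzWith.const (u a)).lipschitzOnWith.absolutelyContinuousOnInterval.fun_add
      (hg.absolutelyContinuousOnInterval_intervalIntegral left_mem_uIcc)
  exact hψ_lip.comp_absolutelyContinuousOnInterval hprim
    fun x hx => hu x hx ▸ mem_image_of_mem u hx

theorem ae_deriv_comp_of_eq_add_integral (hg : IntervalIntegrable g volume a b)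
    (hu : ∀ x ∈ uIcc a b, u x = u a + ∫ t in a..x, g t)
    (hψ : ∀ y ∈ s, HasDerivAt ψ (ψ' y) y) (hus : MapsTo u (uIcc a b) s) :
    ∀ᵐ x, x ∈ uIoc a b → deriv (fun x => ψ (u a + ∫ t in a..x, g t)) x = ψ' (u x) * g x := by
  filter_upwards [hg.ae_hasDerivAt_integral] with x hx hxab
  have hx' : x ∈ uIcc a b := uIoc_subset_uIcc hxab
  exact ((hψ (u x) (hus hx')).comp_of_eq x ((hx hx' a left_mem_uIcc).const_add (u a))
    (hu x hx')).deriv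

theorem intervalIntegrable_comp_mul_of_eq_add_integral (hg : IntervalIntegrable g volume a b)
    (hu : ∀ x ∈ uIcc a b, u x = u a + ∫ t in a..x, g t)
    (hψ : ∀ y ∈ s, HasDerivAt ψ (ψ' y) y) (hψ' : ContinuousOn ψ' s) (hus : MapsTo u (uIcc a b) s) :
    IntervalIntegrable (fun x => ψ' (u x) * g x) volume a b :=
  (absolutelyContinuousOnInterval_comp_of_eq_add_integral hg hu hψ hψ' hus).intervalIntegrable_deriv
    |>.congr_ae <| (ae_restrict_iff' measurableSet_uIoc).mpr <|
      ae_deriv_comp_of_eq_add_integral hg hu hψ hus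

theorem integral_comp_mul_eq_sub_of_eq_add_integral (hg : IntervalIntegrable g volume a b)
    (hu : ∀ x ∈ uIcc a b, u x = u a + ∫ t in a..x, g t)
    (hψ : ∀ y ∈ s, HasDerivAt ψ (ψ' y) y) (hψ' : ContinuousOn ψ' s) (hus : MapsTo u (uIcc a b) s) :
    ∫ x in a..b, ψ' (u x) * g x = ψ (u b) - ψ (u a) := by
  rw [← integral_congr_ae (ae_deriv_comp_of_eq_add_integral hg hu hψ hus),
    (absolutelyContinuousOnInterval_comp_of_eq_add_integral hg hu hψ hψ' hus).integral_deriv_eq_sub,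
    ← hu b right_mem_uIcc, integral_same, add_zero]

end ChainRule

section Entropy

variable {u g : ℝ → ℝ} {w a b : ℝ}

theorem hasDerivAt_mul_lamB_div_of_pos (hw : 0 < w) :
    ∀ y ∈ Ioi (0 : ℝ), HasDerivAt (fun y => w * lamB (y / w)) (Real.log (y / w)) y :=
  fun _ hy => hasDerivAt_mul_lamB_div hw.ne' (ne_of_gt hy)

theorem continuousOn_log_div (hw : 0 < w) : ContinuousOn (fun y => Real.log (y / w)) (Ioi 0) :=
  (continuousOn_id.div_const w).log fun _ hy => (div_pos hy hw).ne'

theorem eqOn_bfun_div (hw : 0 < w) (hpos : ∀ x ∈ uIcc a b, 0 < u x) :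
    EqOn (fun x => bfun (u x / w) (g x)) (fun x => Real.log (u x / w) * g x) (uIcc a b) :=
  fun x hx => (bfun_of_pos (div_pos (hpos x hx) hw) _).trans (mul_comm _ _)

theorem intervalIntegrable_bfun (hw : 0 < w) (hg : IntervalIntegrable g volume a b)
    (hu : ∀ x ∈ uIcc a b, u x = u a + ∫ t in a..x, g t) (hpos : ∀ x ∈ uIcc a b, 0 < u x) :
    IntervalIntegrable (fun x => bfun (u x / w) (g x)) volume a b :=
  (intervalIntegrable_comp_mul_of_eq_add_integral hg hu (hasDerivAt_mul_lamB_div_of_pos hw)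
    (continuousOn_log_div hw) hpos).congr ((eqOn_bfun_div hw hpos).symm.mono uIoc_subset_uIcc)

theorem mul_lamB_sub_eq_integral_bfun (hw : 0 < w) (hg : IntervalIntegrable g volume a b)
    (hu : ∀ x ∈ uIcc a b, u x = u a + ∫ t in a..x, g t) (hpos : ∀ x ∈ uIcc a b, 0 < u x) :
    w * lamB (u b / w) - w * lamB (u a / w) = ∫ x in a..b, bfun (u x / w) (g x) := by
  rw [integral_congr (eqOn_bfun_div hw hpos), integral_comp_mul_eq_sub_of_eq_add_integral hg hu
    (hasDerivAt_mul_lamB_div_of_pos hw) (continuousOn_log_div hw) hpos]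

end Entropy

structure IsGap (Y : Set ℝ) (α β : ℝ) : Prop where
  left_mem : α ∈ Y
  right_mem : β ∈ Y
  lt : α < β
  disjoint : Disjoint (Ioo α β) Y

namespace IsGap

variable {Y : Set ℝ} {α β α' β' : ℝ}

theorem eq_of_not_disjoint (h : IsGap Y α β) (h' : IsGap Y α' β')
    (hI : ¬Disjoint (Ioo α β) (Ioo α' β')) : α = α' ∧ β = β' := by
  obtain ⟨z, hz, hz'⟩ := not_disjoint_iff.mp hI
  constructor
  · by_contra hne
    rcases lt_or_gt_of_ne hne with hlt | hlt
    · exact disjoint_left.mp h.disjoint ⟨hlt, hz'.1.trans hz.2⟩ h'.left_mem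
    · exact disjoint_left.mp h'.disjoint ⟨hlt, hz.1.trans hz'.2⟩ h.left_mem
  · by_contra hne
    rcases lt_or_gt_of_ne hne with hlt | hlt
    · exact disjoint_left.mp h'.disjoint ⟨hz'.1.trans hz.2, hlt⟩ h.right_mem
    · exact disjoint_left.mp h.disjoint ⟨hz.1.trans hz'.2, hlt⟩ h'.right_mem

end IsGap

theorem exists_isGap_mem {Y : Set ℝ} {a b x : ℝ} (hY : IsClosed Y) (ha : a ∈ Y) (hb : b ∈ Y)
    (hx : x ∈ Ioo a b) (hxY : x ∉ Y) :
    ∃ α β, IsGap Y α β ∧ a ≤ α ∧ β ≤ b ∧ x ∈ Ioo α β := by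
  have hbdd : BddAbove (Y ∩ Icc a x) := bddAbove_Icc.mono inter_subset_right
  have hbdd' : BddBelow (Y ∩ Icc x b) := bddBelow_Icc.mono inter_subset_right
  have hα := (hY.inter isClosed_Icc).csSup_mem ⟨a, ha, left_mem_Icc.2 hx.1.le⟩ hbdd
  have hβ := (hY.inter isClosed_Icc).csInf_mem ⟨b, hb, right_mem_Icc.2 hx.2.le⟩ hbdd'
  have hαx : sSup (Y ∩ Icc a x) < x := hα.2.2.lt_of_ne fun h => hxY (h ▸ hα.1)
  have hxβ : x < sInf (Y ∩ Icc x b) := hβ.2.1.lt_of_ne' fun h => hxY (h ▸ hβ.1)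
  refine ⟨_, _, ⟨hα.1, hβ.1, hαx.trans hxβ, disjoint_left.mpr fun z hz hzY => ?_⟩,
    hα.2.1, hβ.2.2, hαx, hxβ⟩
  rcases le_total z x with hzx | hxz
  · exact hz.1.not_ge (le_csSup hbdd ⟨hzY, hα.2.1.trans hz.1.le, hzx⟩)
  · exact hz.2.not_ge (csInf_le hbdd' ⟨hzY, hxz, hz.2.le.trans hβ.2.2⟩)

theorem integral_eq_zero_of_forall_isGap {f : ℝ → ℝ} {Y : Set ℝ} {a b : ℝ} (hY : IsClosed Y)
    (ha : a ∈ Y) (hb : b ∈ Y) (hab : a ≤ b) (hf : IntegrableOn f (Icc a b))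
    (hfY : ∀ y ∈ Y, f y = 0)
    (hgap : ∀ α β, IsGap Y α β → a ≤ α → β ≤ b → ∫ x in α..β, f x = 0) :
    ∫ x in a..b, f x = 0 := by
  set 𝒢 : Set (Set ℝ) := {I | ∃ α β, IsGap Y α β ∧ a ≤ α ∧ β ≤ b ∧ I = Ioo α β}
  have h𝒢_disjoint : 𝒢.PairwiseDisjoint id := by
    rintro _ ⟨α, β, h, -, -, rfl⟩ _ ⟨α', β', h', -, -, rfl⟩ hne
    by_contra hI
    obtain ⟨rfl, rfl⟩ := h.eq_of_not_disjoint h' hI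
    exact hne rfl
  have : Countable 𝒢 := Set.Countable.to_subtype <| h𝒢_disjoint.countable_of_isOpen
    (by rintro _ ⟨α, β, -, -, -, rfl⟩; exact isOpen_Ioo)
    (by rintro _ ⟨α, β, h, -, -, rfl⟩; exact nonempty_Ioo.mpr h.lt)
  have h𝒢_union : ⋃ I : 𝒢, (I : Set ℝ) = Ioo a b \ Y := by
    rw [← sUnion_eq_iUnion]
    ext x
    constructor
    · rintro ⟨_, ⟨α, β, h, hα, hβ, rfl⟩, hx⟩
      exact ⟨⟨hα.trans_lt hx.1, hx.2.trans_le hβ⟩, disjoint_left.mp h.disjoint hx⟩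
    · rintro ⟨hx, hxY⟩
      obtain ⟨α, β, h, hα, hβ, hxαβ⟩ := exists_isGap_mem hY ha hb hx hxY
      exact ⟨_, ⟨α, β, h, hα, hβ, rfl⟩, hxαβ⟩
  have hf_Ioo : IntegrableOn f (Ioo a b) := hf.mono_set Ioo_subset_Icc_self
  calc ∫ x in a..b, f x = ∫ x in Ioo a b \ Y, f x := by
        rw [integral_of_le hab, integral_Ioc_eq_integral_Ioo,
          ← integral_inter_add_sdiff hY.measurableSet hf_Ioo,
          setIntegral_eq_zero_of_forall_eq_zero fun x hx => hfY x hx.2, zero_add]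
    _ = ∑' I : 𝒢, ∫ x in (I : Set ℝ), f x := by
        rw [← h𝒢_union]
        refine integral_iUnion (fun ⟨_, _, _, _, _, _, hI⟩ => hI ▸ measurableSet_Ioo)
          (fun I J hIJ => h𝒢_disjoint I.2 J.2 (Subtype.coe_injective.ne hIJ)) ?_
        rw [h𝒢_union]
        exact hf_Ioo.mono_set sdiff_subset
    _ = 0 := by
        refine (tsum_congr fun I => ?_).trans tsum_zero
        obtain ⟨α, β, h, hα, hβ, hI⟩ := I.2
        rw [hI, ← integral_Ioc_eq_integral_Ioo, ← integral_of_le h.lt.le, hgap α β h hα hβ]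

theorem sub_eq_integral_of_eventually {F f : ℝ → ℝ} {a b : ℝ} (hab : a ≤ b)
    (hF : ContinuousOn F (Icc a b)) (hf : IntegrableOn f (Icc a b))
    (hloc : ∀ x ∈ Ioo a b, ∀ᶠ y in 𝓝 x, F y - F x = ∫ t in x..y, f t) :
    F b - F a = ∫ t in a..b, f t := by
  rcases hab.eq_or_lt with rfl | hlt
  · simp
  have hfi : ∀ x ∈ Icc a b, ∀ y ∈ Icc a b, IntervalIntegrable f volume x y := fun x hx y hy =>
    (hf.mono_set (uIcc_subset_Icc hx hy)).intervalIntegrable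
  set G : ℝ → ℝ := fun x => F x - ∫ t in a..x, f t
  have hG : ContinuousOn G (Icc a b) := by
    refine hF.sub ?_
    simpa [uIcc_of_le hab] using continuousOn_primitive_interval (a := a) (b := b)
      (by rwa [uIcc_of_le hab])
  have hG' : ∀ x ∈ Ioo a b, HasDerivAt G 0 x := fun x hx =>
    (hasDerivAt_const x (G x)).congr_of_eventuallyEq <| by
      filter_upwards [hloc x hx, Ioo_mem_nhds hx.1 hx.2] with y hy hyab
      simp only [G]
      rw [← integral_add_adjacent_intervals (hfi a (left_mem_Icc.2 hab) x (Ioo_subset_Icc_self hx))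
        (hfi x (Ioo_subset_Icc_self hx) y (Ioo_subset_Icc_self hyab))]
      linarith
  obtain ⟨c, -, hc⟩ := exists_hasDerivAt_eq_slope G (fun _ => 0) hlt hG hG'
  have hGab : G b = G a := by
    rcases div_eq_zero_iff.mp hc.symm with h | h <;> linarith
  simp only [G, integral_same, sub_zero] at hGab
  linarith

theorem sub_eq_integral_of_eventually_off {F f : ℝ → ℝ} {Y : Set ℝ} {a b C : ℝ} (hab : a ≤ b)
    (hY : IsClosed Y) (hF : ContinuousOn F (Icc a b)) (hf : IntegrableOn f (Icc a b))
    (hFY : ∀ y ∈ Y, F y = C) (hfY : ∀ y ∈ Y, f y = 0)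
    (hloc : ∀ x ∈ Ioo a b \ Y, ∀ᶠ y in 𝓝 x, F y - F x = ∫ t in x..y, f t) :
    F b - F a = ∫ t in a..b, f t := by
  have hgap : ∀ α β, a ≤ α → α ≤ β → β ≤ b → Disjoint (Ioo α β) Y →
      F β - F α = ∫ t in α..β, f t := fun α β hα hαβ hβ hY =>
    sub_eq_integral_of_eventually hαβ (hF.mono (Icc_subset_Icc hα hβ))
      (hf.mono_set (Icc_subset_Icc hα hβ))
      fun x hx => hloc x ⟨⟨hα.trans_lt hx.1, hx.2.trans_le hβ⟩, disjoint_left.mp hY hx⟩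
  by_cases hYab : (Y ∩ Icc a b).Nonempty
  swap
  · exact hgap a b le_rfl hab le_rfl <| disjoint_left.mpr fun x hx hxY =>
      hYab ⟨x, hxY, Ioo_subset_Icc_self hx⟩
  have hbdd : BddBelow (Y ∩ Icc a b) := bddBelow_Icc.mono inter_subset_right
  have hbdd' : BddAbove (Y ∩ Icc a b) := bddAbove_Icc.mono inter_subset_right
  have hy₁ := (hY.inter isClosed_Icc).csInf_mem hYab hbdd
  have hy₂ := (hY.inter isClosed_Icc).csSup_mem hYab hbdd'
  set y₁ := sInf (Y ∩ Icc a b)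
  set y₂ := sSup (Y ∩ Icc a b)
  have hy₁₂ : y₁ ≤ y₂ := csInf_le_csSup hYab hbdd hbdd'
  have hleft := hgap a y₁ le_rfl hy₁.2.1 hy₁.2.2 <| disjoint_left.mpr fun z hz hzY =>
    hz.2.not_ge (csInf_le hbdd ⟨hzY, hz.1.le, hz.2.le.trans hy₁.2.2⟩)
  have hright := hgap y₂ b hy₂.2.1 hy₂.2.2 le_rfl <| disjoint_left.mpr fun z hz hzY =>
    hz.1.not_ge (le_csSup hbdd' ⟨hzY, hy₂.2.1.trans hz.1.le, hz.2.le⟩)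
  have hmid : ∫ t in y₁..y₂, f t = 0 :=
    integral_eq_zero_of_forall_isGap hY hy₁.1 hy₂.1 hy₁₂
      (hf.mono_set (Icc_subset_Icc hy₁.2.1 hy₂.2.2)) hfY fun α β h hα hβ => by
        rw [← hgap α β (hy₁.2.1.trans hα) h.lt.le (hβ.trans hy₂.2.2) h.disjoint,
          hFY β h.right_mem, hFY α h.left_mem, sub_self]
  have hfi : ∀ x ∈ Icc a b, ∀ y ∈ Icc a b, IntervalIntegrable f volume x y := fun x hx y hy =>
    (hf.mono_set (uIcc_subset_Icc hx hy)).intervalIntegrable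
  rw [← integral_add_adjacent_intervals (hfi a (left_mem_Icc.2 hab) y₂ hy₂.2)
      (hfi y₂ hy₂.2 b (right_mem_Icc.2 hab)),
    ← integral_add_adjacent_intervals (hfi a (left_mem_Icc.2 hab) y₁ hy₁.2) (hfi y₁ hy₁.2 y₂ hy₂.2),
    hmid, ← hleft, ← hright, hFY y₁ hy₁.1, hFY y₂ hy₂.1]
  ring



theorem Filter.Eventually.forall_uIcc {P : ℝ → Prop} {x : ℝ} (h : ∀ᶠ y in 𝓝 x, P y) :
    ∀ᶠ y in 𝓝 x, ∀ z ∈ uIcc x y, P z := by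
  obtain ⟨ε, hε, hP⟩ := Metric.eventually_nhds_iff_ball.mp h
  filter_upwards [Metric.ball_mem_nhds x hε] with y hy z hz
  exact hP z ((convex_ball x ε).ordConnected.uIcc_subset (Metric.mem_ball_self hε) hy hz)

section RelativeEntropy

variable {ι : Type*}

noncomputable def relEntropy (w : ι → ℝ) (A : Finset ι) (y : ι → ℝ) : ℝ :=
  ∑ i ∈ A, w i * lamB (y i / w i)

noncomputable def dualityProduct (w : ι → ℝ) (A : Finset ι) (y z : ι → ℝ) : ℝ :=
  ∑ i ∈ A, bfun (y i / w i) (z i)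

variable {w : ι → ℝ} {A S : Finset ι} {u g : ℝ → ι → ℝ} {a b p q : ℝ}

theorem relEntropy_sdiff_add [DecidableEq ι] (h : S ⊆ A) (y : ι → ℝ) :
    relEntropy w (A \ S) y + relEntropy w S y = relEntropy w A y :=
  Finset.sum_sdiff h

theorem dualityProduct_sdiff_add [DecidableEq ι] (h : S ⊆ A) (y z : ι → ℝ) :
    dualityProduct w (A \ S) y z + dualityProduct w S y z = dualityProduct w A y z :=
  Finset.sum_sdiff h

theorem relEntropy_of_forall_eq_zero {y : ι → ℝ} (hy : ∀ i ∈ A, y i = 0) :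
    relEntropy w A y = ∑ i ∈ A, w i :=
  Finset.sum_congr rfl fun i hi => by rw [hy i hi, zero_div, lamB_zero, mul_one]

theorem dualityProduct_of_forall_eq_zero {y : ι → ℝ} (hy : ∀ i ∈ A, y i = 0) (z : ι → ℝ) :
    dualityProduct w A y z = 0 :=
  Finset.sum_eq_zero fun i hi => by rw [hy i hi, zero_div, bfun_zero_left]

theorem intervalIntegrable_dualityProduct_of_pos (hw : ∀ i ∈ A, 0 < w i)
    (hg : ∀ i ∈ A, IntervalIntegrable (fun t => g t i) volume a b)
    (hu : ∀ i ∈ A, ∀ x ∈ uIcc a b, u x i = u a i + ∫ t in a..x, g t i)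
    (hpos : ∀ x ∈ uIcc a b, ∀ i ∈ A, 0 < u x i) :
    IntervalIntegrable (fun x => dualityProduct w A (u x) (g x)) volume a b := by
  simpa only [dualityProduct, Finset.sum_fn] using IntervalIntegrable.sum A fun i hi =>
    intervalIntegrable_bfun (hw i hi) (hg i hi) (hu i hi) fun x hx => hpos x hx i hi

theorem relEntropy_sub_eq_integral_of_pos (hw : ∀ i ∈ A, 0 < w i)
    (hg : ∀ i ∈ A, IntervalIntegrable (fun t => g t i) volume a b)
    (hu : ∀ i ∈ A, ∀ x ∈ uIcc a b, u x i = u a i + ∫ t in a..x, g t i)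
    (hpos : ∀ x ∈ uIcc a b, ∀ i ∈ A, 0 < u x i) :
    relEntropy w A (u b) - relEntropy w A (u a) = ∫ x in a..b, dualityProduct w A (u x) (g x) := by
  rw [relEntropy, relEntropy, ← Finset.sum_sub_distrib]
  unfold dualityProduct
  rw [integral_finsetSum fun i hi =>
    intervalIntegrable_bfun (hw i hi) (hg i hi) (hu i hi) fun x hx => hpos x hx i hi]
  exact Finset.sum_congr rfl fun i hi =>
    mul_lamB_sub_eq_integral_bfun (hw i hi) (hg i hi) (hu i hi) fun x hx => hpos x hx i hi

theorem relEntropy_sub_eq_integral_of_sdiff_pos [DecidableEq ι] (hSA : S ⊆ A)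
    (hw : ∀ i ∈ A \ S, 0 < w i)
    (hg : ∀ i ∈ A \ S, IntervalIntegrable (fun t => g t i) volume a b)
    (hu : ∀ i ∈ A \ S, ∀ x ∈ uIcc a b, u x i = u a i + ∫ t in a..x, g t i)
    (hpos : ∀ x ∈ uIcc a b, ∀ i ∈ A \ S, 0 < u x i)
    (hB : IntervalIntegrable (fun x => dualityProduct w A (u x) (g x)) volume a b)
    (hS : IntervalIntegrable (fun x => dualityProduct w S (u x) (g x)) volume a b →
      relEntropy w S (u b) - relEntropy w S (u a) = ∫ x in a..b, dualityProduct w S (u x) (g x)) :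
    relEntropy w A (u b) - relEntropy w A (u a) = ∫ x in a..b, dualityProduct w A (u x) (g x) := by
  have hB_sdiff := intervalIntegrable_dualityProduct_of_pos hw hg hu hpos
  have hB_S : IntervalIntegrable (fun x => dualityProduct w S (u x) (g x)) volume a b :=
    (hB.sub hB_sdiff).congr fun x _ => sub_eq_of_eq_add' (dualityProduct_sdiff_add hSA _ _).symm
  calc relEntropy w A (u b) - relEntropy w A (u a)
      = (relEntropy w (A \ S) (u b) - relEntropy w (A \ S) (u a))
        + (relEntropy w S (u b) - relEntropy w S (u a)) := by
        rw [← relEntropy_sdiff_add hSA, ← relEntropy_sdiff_add hSA]; ring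
    _ = ∫ x in a..b, dualityProduct w A (u x) (g x) := by
        rw [relEntropy_sub_eq_integral_of_pos hw hg hu hpos, hS hB_S, ← integral_add hB_sdiff hB_S]
        simp_rw [dualityProduct_sdiff_add hSA]

theorem eventually_relEntropy_sub_eq_integral [DecidableEq ι] {x : ℝ} (hSA : S ⊆ A)
    (hw : ∀ i, 0 < w i) (hx : x ∈ Ioo p q) (hcont : ∀ i, ContinuousOn (fun t => u t i) (Icc p q))
    (hpos : ∀ i ∈ A \ S, 0 < u x i) (hg : ∀ i, IntervalIntegrable (fun t => g t i) volume p q)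
    (hu : ∀ x ∈ uIcc p q, ∀ y ∈ uIcc p q, ∀ i, u y i - u x i = ∫ t in x..y, g t i)
    (hB : IntervalIntegrable (fun t => dualityProduct w A (u t) (g t)) volume p q)
    (hS : ∀ y ∈ uIcc p q,
      IntervalIntegrable (fun t => dualityProduct w S (u t) (g t)) volume x y →
      relEntropy w S (u y) - relEntropy w S (u x) = ∫ t in x..y, dualityProduct w S (u t) (g t)) :
    ∀ᶠ y in 𝓝 x, relEntropy w A (u y) - relEntropy w A (u x) =
      ∫ t in x..y, dualityProduct w A (u t) (g t) := by
  have hIcc := Icc_mem_nhds hx.1 hx.2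
  have hnear : ∀ᶠ y in 𝓝 x, ∀ z ∈ uIcc x y, z ∈ Icc p q ∧ ∀ i ∈ A \ S, 0 < u z i := by
    refine Filter.Eventually.forall_uIcc ?_
    filter_upwards [hIcc, (Finset.eventually_all _).mpr fun i hi =>
      ((hcont i).continuousAt hIcc).eventually (lt_mem_nhds (hpos i hi))] with z hz hz'
    exact ⟨hz, hz'⟩
  filter_upwards [hnear] with y hy
  have hx' : x ∈ uIcc p q := Icc_subset_uIcc (Ioo_subset_Icc_self hx)
  have hsub : uIcc x y ⊆ uIcc p q := fun z hz => Icc_subset_uIcc (hy z hz).1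
  exact relEntropy_sub_eq_integral_of_sdiff_pos hSA (fun i _ => hw i)
    (fun i _ => (hg i).mono_set hsub)
    (fun i _ z hz => (sub_eq_iff_eq_add').mp (hu x hx' z (hsub hz) i))
    (fun z hz => (hy z hz).2) (hB.mono_set hsub) (hS y (hsub right_mem_uIcc))

theorem relEntropy_sub_eq_integral (hw : ∀ i, 0 < w i) (hu0 : ∀ x ∈ uIcc p q, ∀ i, 0 ≤ u x i)
    (hg : ∀ i, IntervalIntegrable (fun t => g t i) volume p q)
    (hu : ∀ x ∈ uIcc p q, ∀ y ∈ uIcc p q, ∀ i, u y i - u x i = ∫ t in x..y, g t i)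
    (hB : IntervalIntegrable (fun x => dualityProduct w A (u x) (g x)) volume p q) :
    relEntropy w A (u q) - relEntropy w A (u p) = ∫ x in p..q, dualityProduct w A (u x) (g x) := by
  classical
  induction A using Finset.strongInduction generalizing p q with
  | H A ih =>
  wlog hpq : p ≤ q generalizing p q
  · have := this (uIcc_comm p q ▸ hu0) (fun i => (hg i).symm) (uIcc_comm p q ▸ hu) hB.symm
      (le_of_not_ge hpq)
    rw [integral_symm, ← this]
    ring
  have hI : uIcc p q = Icc p q := uIcc_of_le hpq
  have hcont : ∀ i, ContinuousOn (fun x => u x i) (Icc p q) := fun i =>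
    hI ▸ continuousOn_of_eq_add_integral (hg i) fun x hx =>
      (sub_eq_iff_eq_add').mp (hu p left_mem_uIcc x hx i)
  -- by nonnegativity, `Y` is where all coordinates in `A` vanish
  set Y := Icc p q ∩ (fun x => ∑ i ∈ A, u x i) ⁻¹' {0}
  have hY_vanish : ∀ y ∈ Y, ∀ i ∈ A, u y i = 0 := fun y hy =>
    (Finset.sum_eq_zero_iff_of_nonneg fun i _ => hu0 y (hI ▸ hy.1) i).mp hy.2
  refine sub_eq_integral_of_eventually_off hpq (C := ∑ i ∈ A, w i)
    ((continuousOn_finsetSum A fun i _ => hcont i).preimage_isClosed_of_isClosed isClosed_Icc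
      isClosed_singleton)
    (continuousOn_finsetSum A fun i _ =>
      continuousOn_const.mul (continuous_lamB.comp_continuousOn ((hcont i).div_const _)))
    (hI ▸ (intervalIntegrable_iff').mp hB)
    (fun y hy => relEntropy_of_forall_eq_zero (hY_vanish y hy))
    (fun y hy => dualityProduct_of_forall_eq_zero (hY_vanish y hy) _) ?_
  rintro x ⟨hx, hxY⟩
  have hx' : x ∈ uIcc p q := hI ▸ Ioo_subset_Icc_self hx
  set S := A.filter fun i => u x i = 0
  have hSA : S ⊂ A := Finset.filter_ssubset.mpr <|
    Finset.exists_ne_zero_of_sum_ne_zero fun h => hxY ⟨Ioo_subset_Icc_self hx, h⟩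
  have hpos : ∀ i ∈ A \ S, 0 < u x i := fun i hi => by
    rw [Finset.mem_sdiff, Finset.mem_filter] at hi
    exact (hu0 x hx' i).lt_of_ne' fun h => hi.2 ⟨hi.1, h⟩
  refine eventually_relEntropy_sub_eq_integral hSA.subset hw hx hcont hpos hg hu hB
    fun y hy hB_S => ?_
  have hsub : uIcc x y ⊆ uIcc p q := uIcc_subset_uIcc hx' hy
  exact ih S hSA (fun z hz => hu0 z (hsub hz)) (fun i => (hg i).mono_set hsub)
    (fun z hz z' hz' => hu z (hsub hz) z' (hsub hz')) hB_S

end RelativeEntropy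

theorem discrete_chain_rule_general (n : ℕ) (T : ℝ)
    (w : Fin n → ℝ) (hw : ∀ i, 0 < w i)
    (c v : ℝ → Fin n → ℝ)
    (hc_nonneg : ∀ t ∈ Set.Icc (0 : ℝ) T, ∀ i, 0 ≤ c t i)
    (hv_int : ∀ i, IntegrableOn (fun t => v t i) (Set.Ioo 0 T))
    (hc_eq : ∀ t ∈ Set.Icc (0 : ℝ) T, ∀ i, c t i = c 0 i + ∫ r in (0 : ℝ)..t, v r i)
    (hB_int : IntegrableOn (fun t => ∑ i, bfun (c t i / w i) (v t i)) (Set.Ioo 0 T)) :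
    ∀ s t : ℝ, 0 ≤ s → s ≤ t → t ≤ T →
      (∑ i, w i * lamB (c t i / w i)) - (∑ i, w i * lamB (c s i / w i))
        = ∫ r in s..t, ∑ i, bfun (c r i / w i) (v r i) := by
  intro s t hs hst htT
  have hsub : uIcc s t ⊆ Icc 0 T := uIcc_subset_Icc ⟨hs, hst.trans htT⟩ ⟨hs.trans hst, htT⟩
  have hv : ∀ i, ∀ x ∈ Icc 0 T, ∀ y ∈ Icc 0 T, IntervalIntegrable (fun r => v r i) volume x y :=
    fun i x hx y hy => (((integrableOn_Icc_iff_integrableOn_Ioo).mpr (hv_int i)).mono_set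
      (uIcc_subset_Icc hx hy)).intervalIntegrable
  refine relEntropy_sub_eq_integral (A := Finset.univ) hw (fun x hx => hc_nonneg x (hsub hx))
    (fun i => hv i s (hsub left_mem_uIcc) t (hsub right_mem_uIcc))
    (fun x hx y hy i => ?_)
    ((intervalIntegrable_iff_integrableOn_Ioo_of_le hst).mpr
      (hB_int.mono_set (Ioo_subset_Ioo hs htT)))
  rw [hc_eq y (hsub hy) i, hc_eq x (hsub hx) i, add_sub_add_left_eq_sub,
    integral_interval_sub_left (hv i 0 ⟨le_rfl, hs.trans (hst.trans htT)⟩ y (hsub hy))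
      (hv i 0 ⟨le_rfl, hs.trans (hst.trans htT)⟩ x (hsub hx))]

theorem discrete_chain_rule (n : ℕ) (T : ℝ) (hT : 0 < T)
    (w : Fin n → ℝ) (hw : ∀ i, 0 < w i)
    (c v : ℝ → Fin n → ℝ)
    (hc_nonneg : ∀ t ∈ Set.Icc (0 : ℝ) T, ∀ i, 0 ≤ c t i)
    (hv_int : ∀ i, IntegrableOn (fun t => v t i) (Set.Ioo 0 T))
    (hc_eq : ∀ t ∈ Set.Icc (0 : ℝ) T, ∀ i, c t i = c 0 i + ∫ r in (0 : ℝ)..t, v r i)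
    (hB_int : IntegrableOn (fun t => ∑ i, bfun (c t i / w i) (v t i)) (Set.Ioo 0 T)) :
    ∀ s t : ℝ, 0 ≤ s → s ≤ t → t ≤ T →
      (∑ i, w i * lamB (c t i / w i)) - (∑ i, w i * lamB (c s i / w i))
        = ∫ r in s..t, ∑ i, bfun (c r i / w i) (v r i) :=
  discrete_chain_rule_general n T w hw c v hc_nonneg hv_int hc_eq hB_int
end
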